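/- In the graph G(x,ε), the subgraph H whose edge set consists of all edges of the path π together with the edge (x_n, y_1) is a (1+ε)-spanner of G(x,ε) of total weight strictly less than 4. Consequently, the minimum total weight of a (1+ε)-spanner of G(x,ε) is strictly less than 4. -/

import Mathlib

/-!
The only edges of `G(x,ε)` missing from `H` are the rungs `(x_i, y_i)` of weight `1`. Each of
them is replaced by the detour `x_i → ⋯ → x_n → y_1 → ⋯ → y_i` of weight
`(n-1)xε + W₀ = 1 + ε`, so replacing every edge of a walk in `G` this way stretches it by a
factor of at most `1 + ε`. The weight of `H` is
`2(n-1)xε + (2 + xε)W₀ = (2 + xε)(1 + ε) - (n-1)(xε)²`, and the bound on `x` gives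
`xε ≤ 1/4`, so it is below `(9/4)(5/4) < 4`. The choice of `n` makes `W₀ ≥ 0`, so all weights
are nonnegative.
-/

open scoped BigOperators

namespace Paper

variable {V : Type*}

/-- The weight of a walk: the sum of its edge weights, with multiplicity. -/
noncomputable def wWalk (w : V → V → ℝ) {G : SimpleGraph V} {u v : V} (p : G.Walk u v) : ℝ :=
  (p.darts.map fun d => w d.toProd.1 d.toProd.2).sum

/-- The distance between two vertices: the infimum of the weights of walks
between them, `⊤` if there is none. -/
noncomputable def gdist (G : SimpleGraph V) (w : V → V → ℝ) (u v : V) : EReal :=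
  ⨅ p : G.Walk u v, (wWalk w p : EReal)

/-- `H` is a `t`-spanner of `G` with respect to the weights `w`. -/
def IsSpanner (G : SimpleGraph V) (w : V → V → ℝ) (H : SimpleGraph V) (t : ℝ) : Prop :=
  H ≤ G ∧ ∀ u v : V, gdist H w u v ≤ (t : EReal) * gdist G w u v

/-- The total weight of the edges of a graph. -/
noncomputable def wGraph (G : SimpleGraph V) (w : V → V → ℝ)
    (hw : ∀ a b, w a b = w b a) : ℝ :=
  ∑ᶠ e ∈ G.edgeSet, Sym2.lift ⟨w, hw⟩ e

/-- Vertices of the hard instance `G(x,ε)`: `Sum.inl ()` is `z`,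
`Sum.inr (Sum.inl i)` is `x_{i+1}`, and `Sum.inr (Sum.inr i)` is `y_{i+1}`. -/
abbrev GrV (n : ℕ) := Unit ⊕ Fin n ⊕ Fin n

/-- The weight `W₀ = 1 + ε - (n-1)xε` of the edge `(x_n, y_1)`. -/
noncomputable def W0 (n : ℕ) (x ε : ℝ) : ℝ := 1 + ε - ((n : ℝ) - 1) * (x * ε)

/-- Base relation of `G(x,ε)`: rungs `(x_i, y_i)`, path edges `(x_i, x_{i+1})`,
`(y_i, y_{i+1})`, the edge `(x_n, y_1)`, and the edges `(x_n, z)`, `(z, y_1)`. -/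
def grRel (n : ℕ) : GrV n → GrV n → Prop
  | Sum.inr (Sum.inl i), Sum.inr (Sum.inr j) => i = j ∨ (i.val = n - 1 ∧ j.val = 0)
  | Sum.inr (Sum.inl i), Sum.inr (Sum.inl j) => j.val = i.val + 1
  | Sum.inr (Sum.inr i), Sum.inr (Sum.inr j) => j.val = i.val + 1
  | Sum.inl _, Sum.inr (Sum.inl i) => i.val = n - 1
  | Sum.inl _, Sum.inr (Sum.inr j) => j.val = 0
  | _, _ => False

/-- The hard instance `G(x,ε)` for the greedy algorithm. -/
def grG (n : ℕ) : SimpleGraph (GrV n) := SimpleGraph.fromRel (grRel n)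

/-- The edge weights of `G(x,ε)`. -/
noncomputable def grW (n : ℕ) (x ε : ℝ) : GrV n → GrV n → ℝ
  | Sum.inr (Sum.inl i), Sum.inr (Sum.inr j) => if i = j then 1 else W0 n x ε
  | Sum.inr (Sum.inr j), Sum.inr (Sum.inl i) => if i = j then 1 else W0 n x ε
  | Sum.inl _, _ => (1 + x * ε) * W0 n x ε / 2
  | _, Sum.inl _ => (1 + x * ε) * W0 n x ε / 2
  | _, _ => x * ε

lemma grW_symm (n : ℕ) (x ε : ℝ) : ∀ a b : GrV n, grW n x ε a b = grW n x ε b a := by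
  rintro (⟨⟩ | a | a) (⟨⟩ | b | b) <;> rfl

/-- Base relation of the subgraph `H`: all edges of the path `π` together
with the edge `(x_n, y_1)`. -/
def hRel2 (n : ℕ) : GrV n → GrV n → Prop
  | Sum.inr (Sum.inl i), Sum.inr (Sum.inr j) => i.val = n - 1 ∧ j.val = 0
  | Sum.inr (Sum.inl i), Sum.inr (Sum.inl j) => j.val = i.val + 1
  | Sum.inr (Sum.inr i), Sum.inr (Sum.inr j) => j.val = i.val + 1
  | Sum.inl _, Sum.inr (Sum.inl i) => i.val = n - 1
  | Sum.inl _, Sum.inr (Sum.inr j) => j.val = 0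
  | _, _ => False

open SimpleGraph

section Walks

variable {G H : SimpleGraph V} {w : V → V → ℝ}

@[simp] lemma wWalk_nil {u : V} : wWalk w (Walk.nil : G.Walk u u) = 0 := rfl

@[simp] lemma wWalk_cons {u v t : V} (h : G.Adj u v) (p : G.Walk v t) :
    wWalk w (Walk.cons h p) = w u v + wWalk w p := by
  simp [wWalk]

@[simp] lemma wWalk_append {u v t : V} (p : G.Walk u v) (q : G.Walk v t) :
    wWalk w (p.append q) = wWalk w p + wWalk w q := by
  simp [wWalk, Walk.darts_append]

lemma wWalk_reverse (hw : ∀ a b, w a b = w b a) {u v : V} (p : G.Walk u v) :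
    wWalk w p.reverse = wWalk w p := by
  simp only [wWalk, Walk.darts_reverse, List.map_reverse, List.sum_reverse, List.map_map]
  exact congrArg List.sum (List.map_congr_left fun d _ => hw _ _)

lemma exists_walk_wWalk_eq_of_adj_succ {m : ℕ} {f : Fin (m + 1) → V} {c : ℝ}
    (hadj : ∀ i : Fin m, G.Adj (f i.castSucc) (f i.succ))
    (hw : ∀ i : Fin m, w (f i.castSucc) (f i.succ) = c) {i j : Fin (m + 1)} (hij : i ≤ j) :
    ∃ p : G.Walk (f i) (f j), wWalk w p = ((j : ℕ) - (i : ℕ) : ℝ) * c := by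
  suffices ∀ k : ℕ, ∀ i : Fin (m + 1), (i : ℕ) + k = j →
      ∃ p : G.Walk (f i) (f j), wWalk w p = k * c by
    obtain ⟨p, hp⟩ := this (j - i) i (by omega)
    exact ⟨p, by rw [hp, Nat.cast_sub (Fin.le_iff_val_le_val.1 hij)]⟩
  intro k
  induction k with
  | zero =>
    intro i hi
    obtain rfl : i = j := Fin.ext hi
    exact ⟨Walk.nil, by simp⟩
  | succ k ih =>
    intro i hi
    obtain ⟨i, rfl⟩ : ∃ i' : Fin m, i = i'.castSucc := ⟨⟨i, by omega⟩, rfl⟩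
    obtain ⟨p, hp⟩ := ih i.succ (by simp at hi ⊢; omega)
    refine ⟨Walk.cons (hadj i) p, ?_⟩
    rw [wWalk_cons, hw, hp]
    push_cast
    ring

lemma exists_walk_wWalk_le_mul {t : ℝ}
    (hadj : ∀ u v, G.Adj u v → ∃ q : H.Walk u v, wWalk w q ≤ t * w u v) {u v : V}
    (p : G.Walk u v) : ∃ q : H.Walk u v, wWalk w q ≤ t * wWalk w p := by
  induction p with
  | nil => exact ⟨Walk.nil, by simp⟩
  | cons h _ ih =>
    obtain ⟨q, hq⟩ := ih
    obtain ⟨r, hr⟩ := hadj _ _ h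
    exact ⟨r.append q, by rw [wWalk_append, wWalk_cons]; linarith⟩

lemma isSpanner_of_forall_adj {t : ℝ} (ht : 0 < t) (hHG : H ≤ G)
    (hadj : ∀ u v, G.Adj u v → ∃ q : H.Walk u v, wWalk w q ≤ t * w u v) :
    IsSpanner G w H t := by
  refine ⟨hHG, fun u v => ?_⟩
  have ht' : (0 : EReal) < t := by exact_mod_cast ht
  rw [← EReal.div_le_iff_le_mul ht' (EReal.coe_ne_top _)]
  refine le_iInf fun p => ?_
  rw [EReal.div_le_iff_le_mul ht' (EReal.coe_ne_top _)]
  obtain ⟨q, hq⟩ := exists_walk_wWalk_le_mul hadj p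
  calc gdist H w u v ≤ wWalk w q := iInf_le _ q
    _ ≤ ((t * wWalk w p : ℝ) : EReal) := by exact_mod_cast hq
    _ = t * wWalk w p := EReal.coe_mul _ _

lemma wGraph_le_sum_of_edgeSet_subset_range {ι : Type*} [Fintype ι] (hw : ∀ a b, w a b = w b a)
    (hw0 : ∀ a b, 0 ≤ w a b) {f : ι → Sym2 V} (hG : G.edgeSet ⊆ Set.range f) :
    wGraph G w hw ≤ ∑ i, Sym2.lift ⟨w, hw⟩ (f i) := by
  classical
  have hfin : G.edgeSet.Finite := (Set.finite_range f).subset hG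
  have hnonneg : ∀ e : Sym2 V, 0 ≤ Sym2.lift ⟨w, hw⟩ e := fun e => by
    induction e using Sym2.ind with | _ a b => exact hw0 a b
  rw [wGraph, ← hfin.coe_toFinset, finsum_mem_coe_finset]
  calc ∑ e ∈ hfin.toFinset, Sym2.lift ⟨w, hw⟩ e
      ≤ ∑ e ∈ Finset.univ.image f, Sym2.lift ⟨w, hw⟩ e :=
        Finset.sum_le_sum_of_subset_of_nonneg
          (fun e he => by simpa using hG (hfin.mem_toFinset.1 he)) fun e _ _ => hnonneg e
    _ ≤ ∑ i, Sym2.lift ⟨w, hw⟩ (f i) :=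
        Finset.sum_image_le_of_nonneg fun e _ => hnonneg e

end Walks

namespace GrV

abbrev x {n : ℕ} (i : Fin n) : GrV n := Sum.inr (Sum.inl i)

abbrev y {n : ℕ} (i : Fin n) : GrV n := Sum.inr (Sum.inr i)

abbrev z {n : ℕ} : GrV n := Sum.inl ()

end GrV

abbrev grH (n : ℕ) : SimpleGraph (GrV n) := SimpleGraph.fromRel (hRel2 n)

section HardInstance

variable {x ε : ℝ}

lemma grH_le_grG (n : ℕ) : grH n ≤ grG n := by
  rintro a b ⟨hne, h⟩
  refine ⟨hne, ?_⟩
  rcases a with _ | a | a <;> rcases b with _ | b | b <;>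
    simp only [hRel2, grRel] at * <;> tauto

lemma grG_adj_cases {n : ℕ} {a b : GrV n} (h : (grG n).Adj a b) :
    (grH n).Adj a b ∨ ∃ i, (a = GrV.x i ∧ b = GrV.y i) ∨ (a = GrV.y i ∧ b = GrV.x i) := by
  obtain ⟨hne, hrel⟩ := h
  rcases a with _ | a | a <;> rcases b with _ | b | b <;>
    simp only [grRel, hRel2, fromRel_adj] at hrel ⊢ <;> grind

lemma grW_nonneg {n : ℕ} (hxε : 0 ≤ x * ε) (hW0 : 0 ≤ W0 n x ε) (a b : GrV n) :
    0 ≤ grW n x ε a b := by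
  have : 0 ≤ (1 + x * ε) * W0 n x ε / 2 := by positivity
  rcases a with _ | a | a <;> rcases b with _ | b | b <;> simp only [grW] <;>
    first | assumption | split_ifs <;> linarith

variable {m : ℕ}

lemma grH_adj_x_succ (i : Fin m) : (grH (m + 1)).Adj (GrV.x i.castSucc) (GrV.x i.succ) :=
  ⟨by simp [Fin.ext_iff], Or.inl (by simp [hRel2])⟩

lemma grH_adj_y_succ (i : Fin m) : (grH (m + 1)).Adj (GrV.y i.castSucc) (GrV.y i.succ) :=
  ⟨by simp [Fin.ext_iff], Or.inl (by simp [hRel2])⟩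

lemma grH_adj_x_last_y_zero : (grH (m + 1)).Adj (GrV.x (Fin.last m)) (GrV.y 0) :=
  ⟨by simp, Or.inl (by simp [hRel2])⟩

lemma grW_x_last_y_zero (hm : m ≠ 0) :
    grW (m + 1) x ε (GrV.x (Fin.last m)) (GrV.y 0) = W0 (m + 1) x ε :=
  if_neg (by simpa [Fin.ext_iff] using hm)

lemma grW_x_y_self {n : ℕ} (i : Fin n) : grW n x ε (GrV.x i) (GrV.y i) = 1 := if_pos rfl

lemma exists_detour (hm : m ≠ 0) (i : Fin (m + 1)) :
    ∃ p : (grH (m + 1)).Walk (GrV.x i) (GrV.y i), wWalk (grW (m + 1) x ε) p = 1 + ε := by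
  obtain ⟨p, hp⟩ := exists_walk_wWalk_eq_of_adj_succ (w := grW (m + 1) x ε) (f := GrV.x)
    (c := x * ε) grH_adj_x_succ (fun _ => rfl) (Fin.le_last i)
  obtain ⟨q, hq⟩ := exists_walk_wWalk_eq_of_adj_succ (w := grW (m + 1) x ε) (f := GrV.y)
    (c := x * ε) grH_adj_y_succ (fun _ => rfl) (Fin.zero_le i)
  refine ⟨p.append (Walk.cons grH_adj_x_last_y_zero q), ?_⟩
  rw [wWalk_append, wWalk_cons, hp, hq, grW_x_last_y_zero hm, W0]
  simp only [Fin.val_last, Fin.val_zero, CharP.cast_eq_zero, Nat.cast_add, Nat.cast_one]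
  ring

lemma isSpanner_grH (hm : m ≠ 0) (hε : 0 ≤ ε) (hw : ∀ a b, 0 ≤ grW (m + 1) x ε a b) :
    IsSpanner (grG (m + 1)) (grW (m + 1) x ε) (grH (m + 1)) (1 + ε) := by
  refine isSpanner_of_forall_adj (by linarith) (grH_le_grG _) fun u v huv => ?_
  rcases grG_adj_cases huv with h | ⟨i, ⟨rfl, rfl⟩ | ⟨rfl, rfl⟩⟩
  · refine ⟨h.toWalk, ?_⟩
    rw [Adj.toWalk, wWalk_cons, wWalk_nil, add_zero]
    nlinarith [hw u v]
  · obtain ⟨p, hp⟩ := exists_detour (x := x) (ε := ε) hm i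
    exact ⟨p, by rw [hp, grW_x_y_self, mul_one]⟩
  · obtain ⟨p, hp⟩ := exists_detour (x := x) (ε := ε) hm i
    refine ⟨p.reverse, ?_⟩
    rw [wWalk_reverse (grW_symm _ _ _), hp, grW_symm, grW_x_y_self, mul_one]

def grHEdge (m : ℕ) : Fin m ⊕ Fin m ⊕ Fin 3 → Sym2 (GrV (m + 1))
  | .inl i => s(GrV.x i.castSucc, GrV.x i.succ)
  | .inr (.inl i) => s(GrV.y i.castSucc, GrV.y i.succ)
  | .inr (.inr k) =>
    ![s(GrV.z, GrV.x (Fin.last m)), s(GrV.z, GrV.y 0), s(GrV.x (Fin.last m), GrV.y 0)] k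

lemma edgeSet_grH_subset_range : (grH (m + 1)).edgeSet ⊆ Set.range (grHEdge m) := by
  intro e he
  induction e using Sym2.ind with | _ a b =>
  obtain ⟨-, h⟩ := he
  rcases a with _ | a | a <;> rcases b with _ | b | b <;>
    simp only [hRel2, or_false, false_or, add_tsub_cancel_right] at h
  all_goals try obtain h | h := h
  all_goals first
    | exact ⟨.inr (.inr 0), by simp [grHEdge, Fin.ext_iff]; omega⟩
    | exact ⟨.inr (.inr 1), by simp [grHEdge, Fin.ext_iff]; omega⟩
    | exact ⟨.inr (.inr 2), by simp [grHEdge, Fin.ext_iff]; omega⟩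
    | exact ⟨.inl ⟨a, by omega⟩, by simp [grHEdge, Fin.ext_iff]; omega⟩
    | exact ⟨.inl ⟨b, by omega⟩, by simp [grHEdge, Fin.ext_iff]; omega⟩
    | exact ⟨.inr (.inl ⟨a, by omega⟩), by simp [grHEdge, Fin.ext_iff]; omega⟩
    | exact ⟨.inr (.inl ⟨b, by omega⟩), by simp [grHEdge, Fin.ext_iff]; omega⟩

lemma wGraph_grH_lt_four (hm : m ≠ 0) (hε0 : 0 ≤ ε) (hε : ε < 1 / 4)
    (hxε : x * ε ≤ 1 / 4) (hw : ∀ a b, 0 ≤ grW (m + 1) x ε a b) :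
    wGraph (grH (m + 1)) (grW (m + 1) x ε) (grW_symm _ _ _) < 4 := by
  refine (wGraph_le_sum_of_edgeSet_subset_range _ hw edgeSet_grH_subset_range).trans_lt
    (lt_of_eq_of_lt (b := (2 + x * ε) * (1 + ε) - m * (x * ε) ^ 2) ?_ ?_)
  · simp [Fintype.sum_sum_type, Fin.sum_univ_three, grHEdge, grW, W0, hm]
    ring
  · nlinarith [sq_nonneg (x * ε)]

end HardInstance

lemma mul_le_quarter_of_le_sqrt {x ε : ℝ} (hε : 0 < ε) (hx1 : 1 ≤ x)
    (hx2 : x ≤ 1 / 2 * √(1 / ε)) : x * ε ≤ 1 / 4 := by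
  have hsq : (2 * x) ^ 2 ≤ 1 / ε := (Real.le_sqrt (by linarith) (by positivity)).1 (by linarith)
  rw [le_div_iff₀ hε] at hsq
  nlinarith

lemma exists_eq_succ_of_eq_one_add_ceil {x ε : ℝ} (hε : 0 < ε) (hx1 : 1 ≤ x)
    (hxε : x * ε ≤ 1 / 4) {n : ℕ} (hn : (n : ℤ) = 1 + ⌈1 / x + 1 / (2 * x ^ 2 * ε)⌉) :
    ∃ m : ℕ, n = m + 1 ∧ m ≠ 0 ∧ 0 ≤ W0 n x ε := by
  set r := 1 / x + 1 / (2 * x ^ 2 * ε)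
  have hx0 : 0 < x := by linarith
  have hceil : 0 < ⌈r⌉ := Int.ceil_pos.2 (by positivity)
  have hn1 : (n : ℝ) - 1 < r + 1 := by
    have : ((n : ℤ) : ℝ) = 1 + ⌈r⌉ := by exact_mod_cast hn
    push_cast at this
    linarith [Int.ceil_lt_add_one r]
  have hr : (r + 1) * (x * ε) = ε + 1 / (2 * x) + x * ε := by
    simp only [r]
    field_simp
  have hx2 : 1 / (2 * x) ≤ 1 / 2 := by
    rw [div_le_div_iff₀ (by positivity) (by norm_num)]
    linarith
  refine ⟨n - 1, by omega, by omega, ?_⟩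
  rw [W0]
  nlinarith [mul_le_mul_of_nonneg_right hn1.le (by positivity : 0 ≤ x * ε)]

/-- the union of the path `π` and the edge `(x_n, y_1)` is a `(1+ε)`-spanner
of `G(x,ε)` of total weight less than `4`; consequently, there is a `(1+ε)`-spanner of
`G(x,ε)` of total weight less than `4`. -/
theorem statement2 (x ε : ℝ) (hε0 : 0 < ε) (hε1 : ε < 1/4)
    (hx1 : 1 ≤ x) (hx2 : x ≤ (1/2) * Real.sqrt (1/ε))
    (n : ℕ) (hn : (n : ℤ) = 1 + ⌈1/x + 1/(2 * x^2 * ε)⌉) :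
    IsSpanner (grG n) (grW n x ε) (SimpleGraph.fromRel (hRel2 n)) (1 + ε) ∧
    wGraph (SimpleGraph.fromRel (hRel2 n)) (grW n x ε) (grW_symm n x ε) < 4 ∧
    ∃ H : SimpleGraph (GrV n), IsSpanner (grG n) (grW n x ε) H (1 + ε) ∧
      wGraph H (grW n x ε) (grW_symm n x ε) < 4 := by
  have hxε := mul_le_quarter_of_le_sqrt hε0 hx1 hx2
  obtain ⟨m, rfl, hm, hW0⟩ := exists_eq_succ_of_eq_one_add_ceil hε0 hx1 hxε hn
  have hw := grW_nonneg (mul_nonneg (by linarith) hε0.le) hW0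
  have hspan := isSpanner_grH hm hε0.le hw
  have hweight := wGraph_grH_lt_four hm hε0.le hε1 hxε hw
  exact ⟨hspan, hweight, _, hspan, hweight⟩

end Paper
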